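/- arXiv:1805.11270 — 2 statements merged into one kernel-verified Lean document; each statement's English description precedes it below -/
import Mathlib

section
/- Let G have n vertices and m edges and let G_C be obtained by attaching t cycles of length r ≥ 3 at every vertex of G. Then HM(G_C) = HM(G) + 10t·M_1(G) + 32mt^2 + 16mt + 8nt^3 + 16nt^2 + (16r−24)nt. -/
open Finset

variable {V : Type*}

/-- Edge set of `G` as a `Finset`, using classical decidability. -/
noncomputable def edgeFS [Fintype V] (G : SimpleGraph V) : Finset (Sym2 V) :=
  letI := Classical.decEq V
  letI : DecidableRel G.Adj := Classical.decRel _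
  G.edgeFinset

/-- Degree of a vertex, using classical decidability. -/
noncomputable def deg [Fintype V] (G : SimpleGraph V) (v : V) : ℕ :=
  letI : DecidableRel G.Adj := Classical.decRel _
  G.degree v

/-- Sum over the edges of `G` of a symmetric integer-valued function of the endpoints. -/
noncomputable def edgeSum [Fintype V] (G : SimpleGraph V) (f : V → V → ℤ)
    (hf : ∀ u v, f u v = f v u) : ℤ :=
  ∑ e ∈ edgeFS G, Sym2.lift ⟨f, hf⟩ e

/-- The hyper Zagreb index `HM(G) = Σ_{uv ∈ E(G)} (d(u)+d(v))²`. -/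
noncomputable def hm [Fintype V] (G : SimpleGraph V) : ℕ :=
  ∑ e ∈ edgeFS G, Sym2.lift ⟨fun u v => (deg G u + deg G v) ^ 2,
    fun u v => by simp [add_comm]⟩ e

/-- The first Zagreb index `M₁(G) = Σ_v d(v)²`. -/
noncomputable def m1 [Fintype V] (G : SimpleGraph V) : ℕ :=
  ∑ v, (deg G v) ^ 2


variable {V : Type*}

/-- Type-I generalized thorn graph `G_P`: attach `t v` pendant paths of order `r`
(i.e. with `r - 1` new vertices each) at each vertex `v` of `G`,
identifying `v` with an endpoint of each path. -/
def thornPath (G : SimpleGraph V) (t : V → ℕ) (r : ℕ) :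
    SimpleGraph (V ⊕ ((Σ v : V, Fin (t v)) × Fin (r - 1))) where
  Adj x y :=
    match x, y with
    | Sum.inl u, Sum.inl v => G.Adj u v
    | Sum.inl u, Sum.inr (p, j) => p.1 = u ∧ j.val = 0
    | Sum.inr (p, j), Sum.inl u => p.1 = u ∧ j.val = 0
    | Sum.inr (p, j), Sum.inr (q, j') => p = q ∧ (j.val + 1 = j'.val ∨ j'.val + 1 = j.val)
  symm := by
    constructor
    rintro (u | ⟨p, j⟩) (v | ⟨q, j'⟩) h
    · exact G.adj_symm h
    · exact h
    · exact h
    · exact ⟨h.1.symm, h.2.symm⟩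
  loopless := by
    constructor
    rintro (u | ⟨p, j⟩) h
    · exact G.irrefl h
    · omega

/-- Type-II generalized thorn graph `G_C`: attach `t v` cycles of length `r`
at each vertex `v` of `G`, identifying `v` with one vertex of each cycle. -/
def thornCycle (G : SimpleGraph V) (t : V → ℕ) (r : ℕ) :
    SimpleGraph (V ⊕ ((Σ v : V, Fin (t v)) × Fin (r - 1))) where
  Adj x y :=
    match x, y with
    | Sum.inl u, Sum.inl v => G.Adj u v
    | Sum.inl u, Sum.inr (p, j) => p.1 = u ∧ (j.val = 0 ∨ j.val = r - 2)
    | Sum.inr (p, j), Sum.inl u => p.1 = u ∧ (j.val = 0 ∨ j.val = r - 2)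
    | Sum.inr (p, j), Sum.inr (q, j') => p = q ∧ (j.val + 1 = j'.val ∨ j'.val + 1 = j.val)
  symm := by
    constructor
    rintro (u | ⟨p, j⟩) (v | ⟨q, j'⟩) h
    · exact G.adj_symm h
    · exact h
    · exact h
    · exact ⟨h.1.symm, h.2.symm⟩
  loopless := by
    constructor
    rintro (u | ⟨p, j⟩) h
    · exact G.irrefl h
    · omega

/-- Type-III generalized thorn graph `G_K`: attach `t v` copies of the complete graph `K_r`
at each vertex `v` of `G`, identifying `v` with one vertex of each copy. -/
def thornComplete (G : SimpleGraph V) (t : V → ℕ) (r : ℕ) :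
    SimpleGraph (V ⊕ ((Σ v : V, Fin (t v)) × Fin (r - 1))) where
  Adj x y :=
    match x, y with
    | Sum.inl u, Sum.inl v => G.Adj u v
    | Sum.inl u, Sum.inr (p, j) => p.1 = u
    | Sum.inr (p, j), Sum.inl u => p.1 = u
    | Sum.inr (p, j), Sum.inr (q, j') => p = q ∧ j ≠ j'
  symm := by
    constructor
    rintro (u | ⟨p, j⟩) (v | ⟨q, j'⟩) h
    · exact G.adj_symm h
    · exact h
    · exact h
    · exact ⟨h.1.symm, h.2.symm⟩
  loopless := by
    constructor
    rintro (u | ⟨p, j⟩) h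
    · exact G.irrefl h
    · exact h.2 rfl

/-- Type-IV generalized thorn graph `G_A`: attach `t v` copies of the complete bipartite
graph `K_{r,s}` at each vertex `v`, identifying `v` with one vertex of the part of size `r`. -/
def thornBipartite (G : SimpleGraph V) (t : V → ℕ) (r s : ℕ) :
    SimpleGraph (V ⊕ ((Σ v : V, Fin (t v)) × (Fin (r - 1) ⊕ Fin s))) where
  Adj x y :=
    match x, y with
    | Sum.inl u, Sum.inl v => G.Adj u v
    | Sum.inl u, Sum.inr (p, x) => p.1 = u ∧ x.isRight
    | Sum.inr (p, x), Sum.inl u => p.1 = u ∧ x.isRight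
    | Sum.inr (p, x), Sum.inr (q, y) => p = q ∧ x.isLeft ≠ y.isLeft
  symm := by
    constructor
    rintro (u | ⟨p, x⟩) (v | ⟨q, y⟩) h
    · exact G.adj_symm h
    · exact h
    · exact h
    · exact ⟨h.1.symm, h.2.symm⟩
  loopless := by
    constructor
    rintro (u | ⟨p, x⟩) h
    · exact G.irrefl h
    · exact h.2 rfl

/-- Type-V generalized thorn graph `G_{C'}`: join `t v` disjoint copies of the cycle `C_r`
to each vertex `v` of `G`, each by a new bridge edge. -/
def joinedCycle (G : SimpleGraph V) (t : V → ℕ) (r : ℕ) :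
    SimpleGraph (V ⊕ ((Σ v : V, Fin (t v)) × Fin r)) where
  Adj x y :=
    match x, y with
    | Sum.inl u, Sum.inl v => G.Adj u v
    | Sum.inl u, Sum.inr (p, j) => p.1 = u ∧ j.val = 0
    | Sum.inr (p, j), Sum.inl u => p.1 = u ∧ j.val = 0
    | Sum.inr (p, j), Sum.inr (q, j') =>
        p = q ∧ j ≠ j' ∧ ((j.val + 1) % r = j'.val ∨ (j'.val + 1) % r = j.val)
  symm := by
    constructor
    rintro (u | ⟨p, j⟩) (v | ⟨q, j'⟩) h
    · exact G.adj_symm h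
    · exact h
    · exact h
    · exact ⟨h.1.symm, h.2.1.symm, h.2.2.symm⟩
  loopless := by
    constructor
    rintro (u | ⟨p, j⟩) h
    · exact G.irrefl h
    · exact h.2.1 rfl

/-- Type-VI generalized thorn graph `G_{K'}`: join `t v` disjoint copies of the complete
graph `K_r` to each vertex `v` of `G`, each by a new bridge edge. -/
def joinedComplete (G : SimpleGraph V) (t : V → ℕ) (r : ℕ) :
    SimpleGraph (V ⊕ ((Σ v : V, Fin (t v)) × Fin r)) where
  Adj x y :=
    match x, y with
    | Sum.inl u, Sum.inl v => G.Adj u v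
    | Sum.inl u, Sum.inr (p, j) => p.1 = u ∧ j.val = 0
    | Sum.inr (p, j), Sum.inl u => p.1 = u ∧ j.val = 0
    | Sum.inr (p, j), Sum.inr (q, j') => p = q ∧ j ≠ j'
  symm := by
    constructor
    rintro (u | ⟨p, j⟩) (v | ⟨q, j'⟩) h
    · exact G.adj_symm h
    · exact h
    · exact h
    · exact ⟨h.1.symm, h.2.symm⟩
  loopless := by
    constructor
    rintro (u | ⟨p, j⟩) h
    · exact G.irrefl h
    · exact h.2 rfl


/-!
Counting every edge once from each endpoint turns the hyper-Zagreb index into a sum of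
vertex-local terms, `HM(H) = Σ_x Σ_{y ~ x} d(x) (d(x) + d(y))`. In `G_C` a vertex `v` of `G`
has degree `d(v) + 2t` and `2t` neighbours on its cycles, every cycle vertex has degree 2, and a
cycle vertex has two cycle neighbours unless it is adjacent to its root `v`, in which case its
neighbours are `v` and one cycle vertex (this needs `r ≥ 3`). Summing the local terms leaves
`Σ d`, `Σ d²` and a dart sum over `G`, which are `2m`, `M₁(G)` and `HM(G)`.
-/

namespace SimpleGraph

variable [Fintype V] (G : SimpleGraph V) [DecidableRel G.Adj] {M : Type*} [AddCommMonoid M]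

def dartEquivSigma : G.Dart ≃ Σ x, G.neighborSet x where
  toFun d := ⟨d.fst, d.snd, d.adj⟩
  invFun s := ⟨(s.1, s.2), s.2.2⟩

theorem sum_darts_eq_sum_sum_neighborFinset (g : V → V → M) :
    ∑ d : G.Dart, g d.fst d.snd = ∑ x, ∑ y ∈ G.neighborFinset x, g x y := by
  rw [← G.dartEquivSigma.symm.sum_comp, Fintype.sum_sigma]
  exact Finset.sum_congr rfl fun x _ => Finset.sum_set_coe (f := g x) (G.neighborSet x)

theorem sum_darts_eq_sum_edgeFinset [DecidableEq V] (g : V → V → M) :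
    ∑ d : G.Dart, g d.fst d.snd =
      ∑ e ∈ G.edgeFinset,
        Sym2.lift ⟨fun u v => g u v + g v u, fun _ _ => add_comm _ _⟩ e := by
  rw [← Finset.sum_fiberwise_of_maps_to (g := Dart.edge) (t := G.edgeFinset)
    fun d _ => G.mem_edgeFinset.2 d.edge_mem]
  refine Finset.sum_congr rfl fun e he => ?_
  induction e using Sym2.ind with | _ u v => ?_
  let d : G.Dart := ⟨(u, v), G.mem_edgeFinset.1 he⟩
  rw [show s(u, v) = d.edge from rfl, Dart.edge_fiber, Finset.sum_pair d.symm_ne.symm]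
  rfl

theorem sum_sum_neighborFinset_left (f : V → M) :
    ∑ x, ∑ _y ∈ G.neighborFinset x, f x = ∑ x, G.degree x • f x := by
  simp only [Finset.sum_const, card_neighborFinset_eq_degree]

theorem sum_sum_neighborFinset_right (f : V → M) :
    ∑ x, ∑ y ∈ G.neighborFinset x, f y = ∑ x, G.degree x • f x := by
  rw [← sum_sum_neighborFinset_left]
  simp only [neighborFinset_eq_filter, Finset.sum_filter]
  rw [Finset.sum_comm]
  simp only [G.adj_comm]

end SimpleGraph

section Indices

variable [Fintype V] (G : SimpleGraph V)

theorem deg_eq_degree [DecidableRel G.Adj] (v : V) : deg G v = G.degree v := by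
  unfold deg
  congr!

theorem edgeFS_eq_edgeFinset [DecidableEq V] [DecidableRel G.Adj] : edgeFS G = G.edgeFinset := by
  unfold edgeFS
  congr!

theorem sum_deg_eq_two_mul_card_edgeFS : ∑ v, deg G v = 2 * #(edgeFS G) := by
  classical
  simp only [deg_eq_degree, edgeFS_eq_edgeFinset]
  exact G.sum_degrees_eq_twice_card_edges

theorem hm_eq_sum_sum_neighborFinset [DecidableRel G.Adj] :
    hm G = ∑ x, ∑ y ∈ G.neighborFinset x, deg G x * (deg G x + deg G y) := by
  classical
  rw [← G.sum_darts_eq_sum_sum_neighborFinset,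
    G.sum_darts_eq_sum_edgeFinset fun x y => deg G x * (deg G x + deg G y), hm,
    edgeFS_eq_edgeFinset]
  refine Finset.sum_congr rfl fun e _ => ?_
  induction e using Sym2.ind with | _ u v => ?_
  simp only [Sym2.lift_mk]
  ring

theorem sum_deg_quadratic (a b c : ℤ) :
    ∑ v, (a * deg G v ^ 2 + b * deg G v + c) =
      a * m1 G + b * (2 * #(edgeFS G)) + c * Fintype.card V := by
  have hdeg : ∑ v, (deg G v : ℤ) = 2 * #(edgeFS G) := by
    exact_mod_cast sum_deg_eq_two_mul_card_edgeFS G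
  simp only [Finset.sum_add_distrib, ← Finset.mul_sum, Finset.sum_const, Finset.card_univ, hdeg,
    m1]
  push_cast
  ring

theorem sum_sum_neighborFinset_deg_add [DecidableRel G.Adj] (k : ℤ) :
    ∑ v, ∑ w ∈ G.neighborFinset v, ((deg G v : ℤ) + k) * (deg G v + k + (deg G w + k)) =
      hm G + 4 * k * m1 G + 4 * k ^ 2 * #(edgeFS G) := by
  have hHM : (hm G : ℤ) =
      ∑ v, ∑ w ∈ G.neighborFinset v, (deg G v : ℤ) * (deg G v + deg G w) := by
    exact_mod_cast hm_eq_sum_sum_neighborFinset G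
  calc _ = ∑ v, ∑ w ∈ G.neighborFinset v, (deg G v : ℤ) * (deg G v + deg G w) +
        (∑ v, ∑ w ∈ G.neighborFinset v, k * deg G w +
          ∑ v, ∑ _w ∈ G.neighborFinset v, (3 * k * deg G v + 2 * k ^ 2)) := by
        simp only [← Finset.sum_add_distrib]
        exact Finset.sum_congr rfl fun v _ => Finset.sum_congr rfl fun w _ => by ring
    _ = hm G + (∑ v, G.degree v • (k * deg G v) +
          ∑ v, G.degree v • (3 * k * deg G v + 2 * k ^ 2)) := by
        rw [hHM, G.sum_sum_neighborFinset_right, G.sum_sum_neighborFinset_left]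
    _ = hm G + ∑ v, (4 * k * deg G v ^ 2 + 2 * k ^ 2 * deg G v + 0) := by
        rw [← Finset.sum_add_distrib]
        refine congrArg _ (Finset.sum_congr rfl fun v _ => ?_)
        rw [nsmul_eq_mul, nsmul_eq_mul, ← deg_eq_degree]
        ring
    _ = _ := by
        rw [sum_deg_quadratic]
        ring

end Indices

section ThornCycle

variable (G : SimpleGraph V) (t : V → ℕ) {r : ℕ}

-- The `q.1`-th cycle at `v = q.1.1` is `v, (q.1, 0), (q.1, 1), …, (q.1, r - 2), v`.
@[simp]
theorem thornCycle_adj_inl_inl {u v : V} :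
    (thornCycle G t r).Adj (Sum.inl u) (Sum.inl v) ↔ G.Adj u v := Iff.rfl

@[simp]
theorem thornCycle_adj_inl_inr {v : V} {q : (Σ v, Fin (t v)) × Fin (r - 1)} :
    (thornCycle G t r).Adj (Sum.inl v) (Sum.inr q) ↔
      q.1.1 = v ∧ (q.2.val = 0 ∨ q.2.val = r - 2) := Iff.rfl

@[simp]
theorem thornCycle_adj_inr_inl {v : V} {q : (Σ v, Fin (t v)) × Fin (r - 1)} :
    (thornCycle G t r).Adj (Sum.inr q) (Sum.inl v) ↔
      q.1.1 = v ∧ (q.2.val = 0 ∨ q.2.val = r - 2) := Iff.rfl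

@[simp]
theorem thornCycle_adj_inr_inr {q q' : (Σ v, Fin (t v)) × Fin (r - 1)} :
    (thornCycle G t r).Adj (Sum.inr q) (Sum.inr q') ↔
      q.1 = q'.1 ∧ (q.2.val + 1 = q'.2.val ∨ q'.2.val + 1 = q.2.val) := Iff.rfl

theorem card_filter_fin_eq_zero_or_eq_sub_two (hr : 3 ≤ r) :
    #{j : Fin (r - 1) | j.val = 0 ∨ j.val = r - 2} = 2 := by
  rw [Finset.card_eq_two]
  refine ⟨⟨0, by omega⟩, ⟨r - 2, by omega⟩, by simp [Fin.ext_iff]; omega, ?_⟩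
  ext j
  simp [Fin.ext_iff]

theorem card_filter_fin_succ_eq_or_eq_succ (hr : 3 ≤ r) (j : Fin (r - 1)) :
    #{k : Fin (r - 1) | j.val + 1 = k.val ∨ k.val + 1 = j.val} =
      if j.val = 0 ∨ j.val = r - 2 then 1 else 2 := by
  split_ifs with hj
  · rw [Finset.card_eq_one]
    rcases hj with hj | hj
    · refine ⟨⟨1, by omega⟩, ?_⟩
      ext k
      simp [Fin.ext_iff]
      omega
    · refine ⟨⟨r - 3, by omega⟩, ?_⟩
      ext k
      simp [Fin.ext_iff]
      omega
  · rw [Finset.card_eq_two]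
    refine ⟨⟨j - 1, by omega⟩, ⟨j + 1, by omega⟩, by simp [Fin.ext_iff], ?_⟩
    ext k
    simp [Fin.ext_iff]
    omega

theorem sum_fin_ite_eq_zero_or_eq_sub_two (hr : 3 ≤ r) (a b : ℤ) :
    ∑ j : Fin (r - 1), (if j.val = 0 ∨ j.val = r - 2 then a else b) = 2 * a + (r - 3) * b := by
  have hcard := Finset.card_filter_add_card_filter_not (s := Finset.univ)
    fun j : Fin (r - 1) => j.val = 0 ∨ j.val = r - 2
  rw [card_filter_fin_eq_zero_or_eq_sub_two hr, Finset.card_univ, Fintype.card_fin] at hcard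
  rw [Finset.sum_ite, Finset.sum_const, Finset.sum_const, card_filter_fin_eq_zero_or_eq_sub_two hr,
    show #{j : Fin (r - 1) | ¬(j.val = 0 ∨ j.val = r - 2)} = r - 3 by omega]
  push_cast [nsmul_eq_mul, Nat.cast_sub hr]
  ring

variable [Fintype V]

section NeighborSums

variable [DecidableRel (thornCycle G t r).Adj] {M : Type*} [AddCommMonoid M]

theorem thornCycle_card_inr_adj_inl (hr : 3 ≤ r) (v : V) :
    #{q | (thornCycle G t r).Adj (Sum.inl v) (Sum.inr q)} = 2 * t v := by
  rw [Finset.card_filter, Fintype.sum_prod_type, Fintype.sum_sigma, Fintype.sum_eq_single v]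
  · simp only [thornCycle_adj_inl_inr, true_and, Finset.sum_const, ← Finset.card_filter,
      card_filter_fin_eq_zero_or_eq_sub_two hr]
    simp [mul_comm]
  · intro u hu
    simp [hu]

theorem thornCycle_card_inr_adj_inr (hr : 3 ≤ r) (q : (Σ v, Fin (t v)) × Fin (r - 1)) :
    #{q' | (thornCycle G t r).Adj (Sum.inr q) (Sum.inr q')} =
      if q.2.val = 0 ∨ q.2.val = r - 2 then 1 else 2 := by
  rw [Finset.card_filter, Fintype.sum_prod_type, Fintype.sum_eq_single q.1]
  · simp only [thornCycle_adj_inr_inr, true_and, ← Finset.card_filter,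
      card_filter_fin_succ_eq_or_eq_succ hr]
  · intro p hp
    simp [Ne.symm hp]

theorem thornCycle_sum_neighborFinset_inl [DecidableRel G.Adj] (hr : 3 ≤ r)
    (f : V ⊕ ((Σ v, Fin (t v)) × Fin (r - 1)) → M) (c : M) (hf : ∀ q, f (Sum.inr q) = c)
    (v : V) :
    ∑ y ∈ (thornCycle G t r).neighborFinset (Sum.inl v), f y =
      ∑ w ∈ G.neighborFinset v, f (Sum.inl w) + (2 * t v) • c := by
  simp only [SimpleGraph.neighborFinset_eq_filter, Finset.sum_filter, Fintype.sum_sum_type, hf]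
  congr 1
  · simp only [thornCycle_adj_inl_inl]
  · rw [← Finset.sum_filter, Finset.sum_const, thornCycle_card_inr_adj_inl G t hr]

theorem thornCycle_sum_neighborFinset_inr (hr : 3 ≤ r)
    (f : V ⊕ ((Σ v, Fin (t v)) × Fin (r - 1)) → M) (c : M) (hf : ∀ q, f (Sum.inr q) = c)
    (q : (Σ v, Fin (t v)) × Fin (r - 1)) :
    ∑ y ∈ (thornCycle G t r).neighborFinset (Sum.inr q), f y =
      if q.2.val = 0 ∨ q.2.val = r - 2 then f (Sum.inl q.1.1) + c else 2 • c := by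
  classical
  simp only [SimpleGraph.neighborFinset_eq_filter, Finset.sum_filter, Fintype.sum_sum_type, hf]
  have hcycle : ∑ q', (if (thornCycle G t r).Adj (Sum.inr q) (Sum.inr q') then c else 0) =
      (if q.2.val = 0 ∨ q.2.val = r - 2 then 1 else 2) • c := by
    rw [← Finset.sum_filter, Finset.sum_const, thornCycle_card_inr_adj_inr G t hr]
  rw [hcycle]
  split_ifs with hq <;> simp [hq]

end NeighborSums

theorem deg_thornCycle (hr : 3 ≤ r) :
    deg (thornCycle G t r) = Sum.elim (fun v => deg G v + 2 * t v) fun _ => 2 := by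
  classical
  funext x
  rw [deg_eq_degree, ← SimpleGraph.card_neighborFinset_eq_degree, Finset.card_eq_sum_ones]
  cases x with
  | inl v =>
    rw [thornCycle_sum_neighborFinset_inl G t hr _ 1 fun _ => rfl, ← Finset.card_eq_sum_ones,
      SimpleGraph.card_neighborFinset_eq_degree, ← deg_eq_degree]
    simp
  | inr q =>
    rw [thornCycle_sum_neighborFinset_inr G t hr _ 1 fun _ => rfl]
    split_ifs <;> rfl

-- Per root `v`: the darts from `v` into `G`, the `2 t v` darts from `v` into its cycles, and the
-- darts leaving the `t v * (r - 1)` vertices of its cycles.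
theorem hm_thornCycle [DecidableRel G.Adj] (hr : 3 ≤ r) :
    (hm (thornCycle G t r) : ℤ) = ∑ v, (∑ w ∈ G.neighborFinset v,
      (deg G v + 2 * t v : ℤ) * (deg G v + 2 * t v + (deg G w + 2 * t w)) +
        2 * t v * (deg G v + 2 * t v) * (deg G v + 2 * t v + 2) +
        t v * (4 * (deg G v + 2 * t v) + 16 * r - 24)) := by
  classical
  rw [hm_eq_sum_sum_neighborFinset, deg_thornCycle G t hr, Fintype.sum_sum_type]
  simp only [Sum.elim_inl, Sum.elim_inr]
  rw [Finset.sum_congr rfl fun v _ => thornCycle_sum_neighborFinset_inl G t hr _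
      ((deg G v + 2 * t v) * (deg G v + 2 * t v + 2)) (fun _ => rfl) v,
    Finset.sum_congr rfl fun q _ => thornCycle_sum_neighborFinset_inr G t hr _ (2 * (2 + 2))
      (fun _ => rfl) q]
  simp only [Fintype.sum_prod_type, Fintype.sum_sigma, Sum.elim_inl, Finset.sum_const,
    Finset.card_univ, Fintype.card_fin, smul_eq_mul]
  push_cast [Nat.cast_ite]
  simp only [sum_fin_ite_eq_zero_or_eq_sub_two hr, ← Finset.sum_add_distrib]
  exact Finset.sum_congr rfl fun v _ => by ring

end ThornCycle

theorem hyperZagreb_thornCycle_uniform {V : Type*} [Fintype V] (G : SimpleGraph V)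
    (t r : ℕ) (hr : 3 ≤ r) (n m : ℕ) (hn : n = Fintype.card V) (hm' : m = (edgeFS G).card) :
    (hm (thornCycle G (fun _ => t) r) : ℤ) =
      hm G + 10 * t * m1 G + 32 * m * t ^ 2 + 16 * m * t + 8 * n * t ^ 3
        + 16 * n * t ^ 2 + (16 * (r : ℤ) - 24) * n * t := by
  classical
  subst hn hm'
  calc (hm (thornCycle G (fun _ => t) r) : ℤ)
      = ∑ v, (∑ w ∈ G.neighborFinset v,
          ((deg G v : ℤ) + 2 * t) * (deg G v + 2 * t + (deg G w + 2 * t)) +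
          (2 * t * deg G v ^ 2 + (8 * t ^ 2 + 8 * t) * deg G v +
            (8 * t ^ 3 + 16 * t ^ 2 + (16 * r - 24) * t))) := by
        rw [hm_thornCycle G _ hr]
        exact Finset.sum_congr rfl fun v _ => by ring
    _ = hm G + 8 * t * m1 G + 16 * t ^ 2 * #(edgeFS G) +
          (2 * t * m1 G + (8 * t ^ 2 + 8 * t) * (2 * #(edgeFS G)) +
            (8 * t ^ 3 + 16 * t ^ 2 + (16 * r - 24) * t) * Fintype.card V) := by
        rw [Finset.sum_add_distrib, sum_sum_neighborFinset_deg_add, sum_deg_quadratic]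
        ring
    _ = _ := by ring
end

section
/- Let G have vertices v_1,…,v_n and m edges. Let G_{C'} be obtained by joining to each vertex v_i, by a new edge, t_i disjoint copies of the cycle C_r (r ≥ 3), where each new edge joins v_i to one vertex of the corresponding cycle. Then HM(G_{C'}) = HM(G) + 2 Σ_{v_i v_j ∈ E(G)} (d(v_i)+d(v_j))(t_i+t_j) + Σ_{v_i v_j ∈ E(G)} (t_i+t_j)^2 + Σ_i t_i (d(v_i)+t_i+3)^2 + (16r+18) Σ_i t_i. -/
open Finset

variable {V : Type*}

variable {V : Type*}

section Infra
open Finset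

/-- Neighbor finset with classical decidability, matching `deg`. -/
noncomputable def nbr {V : Type*} [Fintype V] (G : SimpleGraph V) (v : V) : Finset V :=
  letI : DecidableRel G.Adj := Classical.decRel _
  G.neighborFinset v

lemma mem_nbr {V : Type*} [Fintype V] (G : SimpleGraph V) (v u : V) :
    u ∈ nbr G v ↔ G.Adj v u := by
  unfold nbr
  simp [SimpleGraph.mem_neighborFinset]

lemma deg_eq_card_nbr {V : Type*} [Fintype V] (G : SimpleGraph V) (v : V) :
    deg G v = (nbr G v).card := rfl

lemma two_mul_sym2_sum {V : Type*} [Fintype V] (G : SimpleGraph V) [DecidableRel G.Adj]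
    (f : V → V → ℤ) (hf : ∀ u v, f u v = f v u) :
    2 * ∑ e ∈ G.edgeFinset, Sym2.lift ⟨f, hf⟩ e
      = ∑ v : V, ∑ u ∈ G.neighborFinset v, f v u := by
  classical
  have key : ∑ d : G.Dart, f d.fst d.snd
      = ∑ e ∈ G.edgeFinset, ∑ d ∈ ({d : G.Dart | d.edge = e} : Finset _), f d.fst d.snd := by
    exact (Finset.sum_fiberwise_of_maps_to (fun d _ => by simp [SimpleGraph.Dart.edge_mem]) _).symm
  have fiber : ∀ e ∈ G.edgeFinset,
      ∑ d ∈ ({d : G.Dart | d.edge = e} : Finset _), f d.fst d.snd = 2 * Sym2.lift ⟨f, hf⟩ e := by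
    intro e he
    rw [SimpleGraph.mem_edgeFinset] at he
    induction e with
    | _ v w =>
      let d : G.Dart := ⟨(v, w), he⟩
      have hfib : ({d' : G.Dart | d'.edge = d.edge} : Finset _) = {d, d.symm} := d.edge_fiber
      have hdedge : d.edge = s(v, w) := rfl
      rw [← hdedge, hfib, Finset.sum_pair d.symm_ne.symm, hdedge, Sym2.lift_mk]
      have h1 : f d.symm.fst d.symm.snd = f w v := rfl
      have h2 : f d.fst d.snd = f v w := rfl
      rw [h1, h2, hf w v]; ring
  rw [Finset.sum_congr rfl fiber, ← Finset.mul_sum] at key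
  rw [← key]
  have fib2 : ∀ v : V, ∑ d ∈ ({d : G.Dart | d.fst = v} : Finset _), f d.fst d.snd
      = ∑ u ∈ G.neighborFinset v, f v u := by
    intro v
    refine Finset.sum_bij' (fun d _ => d.snd)
      (fun u hu => (⟨(v, u), by simpa using hu⟩ : G.Dart))
      ?_ ?_ ?_ ?_ ?_
    · intro d hd
      simp only [Finset.mem_filter, Finset.mem_univ, true_and] at hd
      have hadj := d.adj
      rw [hd] at hadj
      simpa using hadj
    · intro u hu; simp
    · intro d hd
      simp only [Finset.mem_filter, Finset.mem_univ, true_and] at hd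
      exact SimpleGraph.Dart.ext _ _ (Prod.ext hd.symm rfl)
    · intro u hu; rfl
    · intro d hd
      simp only [Finset.mem_filter, Finset.mem_univ, true_and] at hd
      subst hd; rfl
  have key2 : ∑ d : G.Dart, f d.fst d.snd
      = ∑ v : V, ∑ d ∈ ({d : G.Dart | d.fst = v} : Finset _), f d.fst d.snd :=
    (Finset.sum_fiberwise_of_maps_to (fun d _ => Finset.mem_univ _) _).symm
  rw [key2, Finset.sum_congr rfl (fun v _ => fib2 v)]

lemma two_mul_edgeSum {V : Type*} [Fintype V] (G : SimpleGraph V)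
    (f : V → V → ℤ) (hf : ∀ u v, f u v = f v u) :
    2 * edgeSum G f hf = ∑ v : V, ∑ u ∈ nbr G v, f v u := by
  unfold edgeSum edgeFS nbr
  exact @two_mul_sym2_sum _ _ G (Classical.decRel _) f hf

lemma hm_cast {V : Type*} [Fintype V] (G : SimpleGraph V) :
    (hm G : ℤ) = edgeSum G (fun u v => ((deg G u : ℤ) + deg G v) ^ 2)
      (by intro u v; ring) := by
  classical
  unfold hm edgeSum
  rw [Nat.cast_sum]
  apply Finset.sum_congr rfl
  intro e _
  induction e with
  | _ u v =>
    rw [Sym2.lift_mk, Sym2.lift_mk]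
    push_cast
    ring

lemma sum_if_const {α : Type*} [Fintype α] (P : Prop) [Decidable P] (X : α → ℤ) :
    ∑ a : α, (if P then X a else 0) = if P then ∑ a : α, X a else 0 := by
  split_ifs <;> simp

end Infra

section FinHelp

lemma fin_val_eq_zero_iff {r : ℕ} [NeZero r] (j : Fin r) : j.val = 0 ↔ j = 0 := by
  rw [Fin.ext_iff]
  simp
variable {r : ℕ} [NeZero r]

lemma fin_val_add_one (hr : 3 ≤ r) (j : Fin r) : (j + 1).val = (j.val + 1) % r := by
  rw [Fin.val_add, Fin.val_one' r, Nat.mod_eq_of_lt (show 1 < r by omega)]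

lemma fin_one_ne_zero' (hr : 3 ≤ r) : (1 : Fin r) ≠ 0 := by
  simp [Fin.ext_iff, Fin.val_one' r, Nat.mod_eq_of_lt (show 1 < r by omega)]

lemma fin_two_ne_zero' (hr : 3 ≤ r) : (1 : Fin r) + 1 ≠ 0 := by
  simp only [ne_eq, Fin.ext_iff]
  rw [fin_val_add_one hr, Fin.val_one' r, Fin.val_zero]
  rw [Nat.mod_eq_of_lt (show 1 < r by omega), Nat.mod_eq_of_lt (show 1 + 1 < r by omega)]
  omega

lemma cycAdj (hr : 3 ≤ r) (j j' : Fin r) :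
    (j ≠ j' ∧ ((j.val + 1) % r = j'.val ∨ (j'.val + 1) % r = j.val))
      ↔ (j' = j + 1 ∨ j' = j - 1) := by
  have h1 : ((j.val + 1) % r = j'.val) ↔ j' = j + 1 := by
    rw [← fin_val_add_one hr j]
    exact ⟨fun h => (Fin.ext h).symm, fun h => by rw [h]⟩
  have h2 : ((j'.val + 1) % r = j.val) ↔ j' = j - 1 := by
    rw [← fin_val_add_one hr j']
    exact ⟨fun h => eq_sub_iff_add_eq.mpr (Fin.ext h),
      fun h => congrArg Fin.val (eq_sub_iff_add_eq.mp h)⟩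
  constructor
  · rintro ⟨-, h | h⟩
    · exact Or.inl (h1.mp h)
    · exact Or.inr (h2.mp h)
  · rintro (h | h)
    · refine ⟨?_, Or.inl (h1.mpr h)⟩
      rintro rfl
      rw [left_eq_add] at h
      exact fin_one_ne_zero' hr h
    · refine ⟨?_, Or.inr (h2.mpr h)⟩
      rintro rfl
      rw [eq_sub_iff_add_eq, add_eq_left] at h
      exact fin_one_ne_zero' hr h

lemma fin_succ_ne_pred (hr : 3 ≤ r) (j : Fin r) : j + 1 ≠ j - 1 := by
  intro h
  have h2 : (1 : Fin r) + 1 = 0 := by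
    have h3 := sub_eq_zero_of_eq h
    rw [show j + 1 - (j - 1) = 1 + 1 by abel] at h3
    exact h3
  exact fin_two_ne_zero' hr h2

lemma sum_ite_or {α : Type*} [Fintype α] [DecidableEq α] (a b : α) (hab : a ≠ b) (f : α → ℤ) :
    ∑ x : α, (if x = a ∨ x = b then f x else 0) = f a + f b := by
  rw [← Finset.sum_filter]
  have h : Finset.univ.filter (fun x => x = a ∨ x = b) = {a, b} := by ext x; simp
  rw [h, Finset.sum_pair hab]

lemma sum_ite_eq_zero (f : Fin r → ℤ) :
    ∑ j : Fin r, (if j = 0 then f j else 0) = f 0 := by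
  rw [Finset.sum_ite_eq' Finset.univ (0 : Fin r) f]
  simp


end FinHelp

section CycleSum
variable {r : ℕ} [NeZero r]
lemma cycle_sum (hr : 3 ≤ r) :
    ∑ j : Fin r, (((if j = 0 then (3:ℤ) else 2) + (if j + 1 = 0 then (3:ℤ) else 2))^2
      + ((if j = 0 then (3:ℤ) else 2) + (if j - 1 = 0 then (3:ℤ) else 2))^2)
      = 32 * r + 36 := by
  set g : Fin r → ℤ := fun j => if j = 0 then 3 else 2 with hg
  have step1 : ∑ j : Fin r, (g j + g (j - 1))^2 = ∑ j : Fin r, (g (j + 1) + g j)^2 := by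
    refine (Fintype.sum_equiv (Equiv.addRight (1 : Fin r))
      (fun k => (g (k + 1) + g k)^2) (fun j => (g j + g (j - 1))^2) (fun k => ?_)).symm
    simp [Equiv.addRight]
  have split : ∀ j : Fin r, (g j + g (j+1))^2 + (g (j+1) + g j)^2
      = 32 + (if j = 0 then (18:ℤ) else 0) + (if j + 1 = 0 then (18:ℤ) else 0) := by
    intro j
    have h10 : ¬(j = 0 ∧ j + 1 = 0) := by
      rintro ⟨rfl, h⟩; rw [zero_add] at h; exact fin_one_ne_zero' hr h
    simp only [hg]
    split_ifs with h1 h2 h3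
    · exact absurd ⟨h1, h2⟩ h10
    · ring
    · ring
    · ring
  calc ∑ j : Fin r, ((g j + g (j+1))^2 + (g j + g (j-1))^2)
      = ∑ j : Fin r, ((g j + g (j+1))^2 + (g (j+1) + g j)^2) := by
        rw [Finset.sum_add_distrib, Finset.sum_add_distrib, step1]
    _ = ∑ j : Fin r, (32 + (if j = 0 then (18:ℤ) else 0) + (if j + 1 = 0 then (18:ℤ) else 0)) := by
        exact Finset.sum_congr rfl fun j _ => split j
    _ = 32 * r + 36 := by
        rw [Finset.sum_add_distrib, Finset.sum_add_distrib, Finset.sum_const]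
        have h1 : ∑ j : Fin r, (if j = 0 then (18:ℤ) else 0) = 18 := by
          rw [Finset.sum_ite_eq' Finset.univ (0 : Fin r)]; simp
        have h2 : ∑ j : Fin r, (if j + 1 = 0 then (18:ℤ) else 0) = 18 := by
          have : ∀ j : Fin r, (j + 1 = 0) = (j = -1) := by
            intro j; rw [eq_iff_iff]
            constructor
            · intro h; exact eq_neg_of_add_eq_zero_left h
            · intro h; rw [h]; exact neg_add_cancel _
          simp_rw [this]
          rw [Finset.sum_ite_eq' Finset.univ (-1 : Fin r)]; simp
        rw [h1, h2]
        simp only [Finset.card_univ, Fintype.card_fin, nsmul_eq_mul]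
        ring

end CycleSum


section JC
open Finset
variable {V : Type*} [Fintype V] (G : SimpleGraph V) (t : V → ℕ) {r : ℕ} [NeZero r]

lemma sum_nbr_inl (hr : 3 ≤ r) (v : V) (f : V ⊕ ((Σ v : V, Fin (t v)) × Fin r) → ℤ) :
    ∑ y ∈ nbr (joinedCycle G t r) (Sum.inl v), f y
      = (∑ u ∈ nbr G v, f (Sum.inl u)) + ∑ i : Fin (t v), f (Sum.inr (⟨v, i⟩, 0)) := by
  classical
  have hset : nbr (joinedCycle G t r) (Sum.inl v)
      = Finset.univ.filter (fun y => (joinedCycle G t r).Adj (Sum.inl v) y) := by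
    ext y; simp [mem_nbr]
  rw [hset, Finset.sum_filter, Fintype.sum_sum_type]
  congr 1
  · have hGv : nbr G v = Finset.univ.filter (G.Adj v) := by ext u; simp [mem_nbr]
    rw [hGv, Finset.sum_filter]
    apply Finset.sum_congr rfl
    intro u _
    have : (joinedCycle G t r).Adj (Sum.inl v) (Sum.inl u) ↔ G.Adj v u := Iff.rfl
    simp only [this]
  · rw [Fintype.sum_prod_type]
    have inner : ∀ (q : Σ v' : V, Fin (t v')),
        (∑ j : Fin r, if (joinedCycle G t r).Adj (Sum.inl v) (Sum.inr (q, j))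
            then f (Sum.inr (q, j)) else 0)
          = if q.1 = v then f (Sum.inr (q, 0)) else 0 := by
      intro q
      by_cases hq : q.1 = v
      · rw [if_pos hq, ← sum_ite_eq_zero (fun j => f (Sum.inr (q, j)))]
        apply Finset.sum_congr rfl; intro j _
        have : (joinedCycle G t r).Adj (Sum.inl v) (Sum.inr (q, j)) ↔ j = 0 := by
          show q.1 = v ∧ j.val = 0 ↔ _
          rw [fin_val_eq_zero_iff _]
          simp [hq]
        simp only [this]
      · rw [if_neg hq]
        apply Finset.sum_eq_zero; intro j _
        rw [if_neg]
        show ¬(q.1 = v ∧ j.val = 0)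
        tauto
    rw [Finset.sum_congr rfl (fun q _ => inner q)]
    rw [← Finset.univ_sigma_univ, Finset.sum_sigma]
    have outer : ∀ v' : V,
        (∑ i : Fin (t v'), if (⟨v', i⟩ : Σ v'' : V, Fin (t v'')).1 = v
            then f (Sum.inr (⟨v', i⟩, 0)) else 0)
          = if v' = v then ∑ i : Fin (t v'), f (Sum.inr (⟨v', i⟩, 0)) else 0 := by
      intro v'
      show (∑ i : Fin (t v'), if v' = v then f (Sum.inr (⟨v', i⟩, 0)) else 0) = _
      exact sum_if_const _ _
    rw [Finset.sum_congr rfl (fun v' _ => outer v')]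
    rw [Finset.sum_ite_eq' Finset.univ v (fun v' => ∑ i : Fin (t v'), f (Sum.inr (⟨v', i⟩, 0)))]
    simp

lemma sum_nbr_inr (hr : 3 ≤ r) (p : Σ v : V, Fin (t v)) (j : Fin r)
    (f : V ⊕ ((Σ v : V, Fin (t v)) × Fin r) → ℤ) :
    ∑ y ∈ nbr (joinedCycle G t r) (Sum.inr (p, j)), f y
      = (if j = 0 then f (Sum.inl p.1) else 0)
        + (f (Sum.inr (p, j + 1)) + f (Sum.inr (p, j - 1))) := by
  classical
  have hset : nbr (joinedCycle G t r) (Sum.inr (p, j))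
      = Finset.univ.filter (fun y => (joinedCycle G t r).Adj (Sum.inr (p, j)) y) := by
    ext y; simp [mem_nbr]
  rw [hset, Finset.sum_filter, Fintype.sum_sum_type]
  congr 1
  · by_cases hj : j = 0
    · rw [if_pos hj]
      have : ∀ u : V, ((joinedCycle G t r).Adj (Sum.inr (p, j)) (Sum.inl u)) ↔ p.1 = u := by
        intro u
        show p.1 = u ∧ j.val = 0 ↔ _
        rw [fin_val_eq_zero_iff _]
        simp [hj]
      simp only [this]
      rw [Finset.sum_ite_eq Finset.univ p.1 (fun u => f (Sum.inl u))]
      simp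
    · rw [if_neg hj]
      apply Finset.sum_eq_zero; intro u _
      rw [if_neg]
      show ¬(p.1 = u ∧ j.val = 0)
      rw [fin_val_eq_zero_iff _]
      tauto
  · rw [Fintype.sum_prod_type]
    have inner : ∀ (q : Σ v' : V, Fin (t v')),
        (∑ j' : Fin r, if (joinedCycle G t r).Adj (Sum.inr (p, j)) (Sum.inr (q, j'))
            then f (Sum.inr (q, j')) else 0)
          = if q = p then f (Sum.inr (q, j + 1)) + f (Sum.inr (q, j - 1)) else 0 := by
      intro q
      by_cases hq : q = p
      · rw [if_pos hq,
          ← sum_ite_or (j + 1) (j - 1) (fin_succ_ne_pred hr j) (fun j' => f (Sum.inr (q, j')))]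
        apply Finset.sum_congr rfl; intro j' _
        have : (joinedCycle G t r).Adj (Sum.inr (p, j)) (Sum.inr (q, j'))
            ↔ (j' = j + 1 ∨ j' = j - 1) := by
          show p = q ∧ (j ≠ j' ∧ _) ↔ _
          rw [← cycAdj hr j j']
          simp [hq.symm]
        simp only [this]
      · rw [if_neg hq]
        apply Finset.sum_eq_zero; intro j' _
        rw [if_neg]
        show ¬(p = q ∧ _)
        exact fun h => hq h.1.symm
    rw [Finset.sum_congr rfl (fun q _ => inner q)]
    rw [Finset.sum_ite_eq' Finset.univ p
      (fun q => f (Sum.inr (q, j + 1)) + f (Sum.inr (q, j - 1)))]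
    simp

lemma deg_inl (hr : 3 ≤ r) (v : V) :
    (deg (joinedCycle G t r) (Sum.inl v) : ℤ) = deg G v + t v := by
  have h1 : (deg (joinedCycle G t r) (Sum.inl v) : ℤ)
      = ∑ y ∈ nbr (joinedCycle G t r) (Sum.inl v), (1 : ℤ) := by
    rw [deg_eq_card_nbr]; simp
  rw [h1, sum_nbr_inl G t hr v (fun _ => 1)]
  rw [deg_eq_card_nbr]
  simp [mul_comm]

lemma deg_inr (hr : 3 ≤ r) (p : Σ v : V, Fin (t v)) (j : Fin r) :
    (deg (joinedCycle G t r) (Sum.inr (p, j)) : ℤ) = if j = 0 then 3 else 2 := by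
  have h1 : (deg (joinedCycle G t r) (Sum.inr (p, j)) : ℤ)
      = ∑ y ∈ nbr (joinedCycle G t r) (Sum.inr (p, j)), (1 : ℤ) := by
    rw [deg_eq_card_nbr]; simp
  rw [h1, sum_nbr_inr G t hr p j (fun _ => 1)]
  split_ifs <;> ring

end JC

theorem hyperZagreb_joinedCycle {V : Type*} [Fintype V] (G : SimpleGraph V)
    (t : V → ℕ) (r : ℕ) (hr : 3 ≤ r) :
    (hm (joinedCycle G t r) : ℤ) =
      hm G
      + 2 * edgeSum G (fun u v => ((deg G u : ℤ) + deg G v) * ((t u : ℤ) + t v))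
      (by intro u v; ring)
      + edgeSum G (fun u v => ((t u : ℤ) + t v) ^ 2)
      (by intro u v; ring)
      + ∑ i : V, (t i : ℤ) * ((deg G i : ℤ) + (t i : ℤ) + 3) ^ 2
      + (16 * (r : ℤ) + 18) * ∑ i : V, (t i : ℤ) := by
  haveI : NeZero r := ⟨by omega⟩
  have cancel : ∀ X Y : ℤ, 2 * X = 2 * Y → X = Y := fun X Y h => by linarith
  apply cancel
  set H := joinedCycle G t r with hH
  have e0 : 2 * (hm G : ℤ)
      = ∑ v : V, ∑ u ∈ nbr G v, ((deg G v : ℤ) + deg G u) ^ 2 := by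
    rw [hm_cast]; exact two_mul_edgeSum G _ _
  have e1 : 2 * edgeSum G (fun u v => ((deg G u : ℤ) + deg G v) * ((t u : ℤ) + t v))
        (by intro u v; ring)
      = ∑ v : V, ∑ u ∈ nbr G v, ((deg G v : ℤ) + deg G u) * ((t v : ℤ) + t u) :=
    two_mul_edgeSum G _ _
  have e2 : 2 * edgeSum G (fun u v => ((t u : ℤ) + t v) ^ 2) (by intro u v; ring)
      = ∑ v : V, ∑ u ∈ nbr G v, ((t v : ℤ) + t u) ^ 2 :=
    two_mul_edgeSum G _ _
  rw [hm_cast, two_mul_edgeSum, Fintype.sum_sum_type]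
  beta_reduce
  have hA : (∑ a : V, ∑ u ∈ nbr H (Sum.inl a), ((deg H (Sum.inl a) : ℤ) + deg H u) ^ 2)
      = ∑ a : V, ((∑ u ∈ nbr G a, (((deg G a : ℤ) + t a) + ((deg G u : ℤ) + t u)) ^ 2)
          + (t a : ℤ) * ((deg G a : ℤ) + t a + 3) ^ 2) := by
    apply Finset.sum_congr rfl; intro a _
    rw [sum_nbr_inl G t hr a]
    congr 1
    · apply Finset.sum_congr rfl; intro u _
      rw [deg_inl G t hr, deg_inl G t hr]
    · have h3 : ∀ i : Fin (t a),
          ((deg H (Sum.inl a) : ℤ) + deg H (Sum.inr (⟨a, i⟩, 0))) ^ 2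
            = ((deg G a : ℤ) + t a + 3) ^ 2 := by
        intro i
        rw [deg_inl G t hr, deg_inr G t hr]
        simp
      rw [Finset.sum_congr rfl (fun i _ => h3 i), Finset.sum_const, Finset.card_univ,
        Fintype.card_fin, nsmul_eq_mul]
  have hB : (∑ z : (Σ v : V, Fin (t v)) × Fin r,
        ∑ u ∈ nbr H (Sum.inr z), ((deg H (Sum.inr z) : ℤ) + deg H u) ^ 2)
      = ∑ a : V, (t a : ℤ) * (((deg G a : ℤ) + t a + 3) ^ 2 + (32 * (r : ℤ) + 36)) := by
    rw [Fintype.sum_prod_type]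
    have hper : ∀ (p : Σ v : V, Fin (t v)),
        (∑ j : Fin r, ∑ u ∈ nbr H (Sum.inr (p, j)),
            ((deg H (Sum.inr (p, j)) : ℤ) + deg H u) ^ 2)
          = ((deg G p.1 : ℤ) + t p.1 + 3) ^ 2 + (32 * (r : ℤ) + 36) := by
      intro p
      have hj : ∀ j : Fin r,
          (∑ u ∈ nbr H (Sum.inr (p, j)), ((deg H (Sum.inr (p, j)) : ℤ) + deg H u) ^ 2)
            = (if j = 0 then ((deg G p.1 : ℤ) + t p.1 + 3) ^ 2 else 0)
              + (((if j = 0 then (3:ℤ) else 2) + (if j + 1 = 0 then (3:ℤ) else 2)) ^ 2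
                + ((if j = 0 then (3:ℤ) else 2) + (if j - 1 = 0 then (3:ℤ) else 2)) ^ 2) := by
        intro j
        rw [sum_nbr_inr G t hr p j]
        rw [deg_inr G t hr, deg_inr G t hr, deg_inr G t hr, deg_inl G t hr]
        congr 1
        by_cases h0 : j = 0
        · rw [if_pos h0, if_pos h0, if_pos h0]; ring
        · rw [if_neg h0, if_neg h0]
      rw [Finset.sum_congr rfl (fun j _ => hj j), Finset.sum_add_distrib]
      congr 1
      · rw [Finset.sum_ite_eq' Finset.univ (0 : Fin r)
          (fun _ => ((deg G p.1 : ℤ) + t p.1 + 3) ^ 2)]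
        simp
      · exact cycle_sum hr
    rw [Finset.sum_congr rfl (fun p _ => hper p)]
    rw [← Finset.univ_sigma_univ, Finset.sum_sigma]
    apply Finset.sum_congr rfl; intro a _
    show (∑ _i : Fin (t a), (((deg G a : ℤ) + t a + 3) ^ 2 + (32 * (r : ℤ) + 36))) = _
    rw [Finset.sum_const, Finset.card_univ, Fintype.card_fin, nsmul_eq_mul]
  rw [hA, hB]
  have hL1 : (∑ a : V, ((∑ u ∈ nbr G a, (((deg G a : ℤ) + t a) + ((deg G u : ℤ) + t u)) ^ 2)
          + (t a : ℤ) * ((deg G a : ℤ) + t a + 3) ^ 2))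
      = (∑ v : V, ∑ u ∈ nbr G v, ((deg G v : ℤ) + deg G u) ^ 2)
        + 2 * (∑ v : V, ∑ u ∈ nbr G v, ((deg G v : ℤ) + deg G u) * ((t v : ℤ) + t u))
        + (∑ v : V, ∑ u ∈ nbr G v, ((t v : ℤ) + t u) ^ 2)
        + ∑ i : V, (t i : ℤ) * ((deg G i : ℤ) + (t i : ℤ) + 3) ^ 2 := by
    rw [Finset.mul_sum, ← Finset.sum_add_distrib, ← Finset.sum_add_distrib,
      ← Finset.sum_add_distrib]
    apply Finset.sum_congr rfl; intro a _
    rw [Finset.mul_sum, ← Finset.sum_add_distrib, ← Finset.sum_add_distrib]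
    congr 1
    apply Finset.sum_congr rfl; intro u _
    ring
  have hL2 : (∑ a : V, (t a : ℤ) * (((deg G a : ℤ) + t a + 3) ^ 2 + (32 * (r : ℤ) + 36)))
      = (∑ i : V, (t i : ℤ) * ((deg G i : ℤ) + (t i : ℤ) + 3) ^ 2)
        + (32 * (r : ℤ) + 36) * ∑ i : V, (t i : ℤ) := by
    rw [Finset.mul_sum, ← Finset.sum_add_distrib]
    apply Finset.sum_congr rfl; intro a _
    ring
  rw [hL1, hL2]
  linear_combination -e0 - 2 * e1 - e2
end
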